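/- arXiv:2510.01268 — 2 statements merged into one kernel-verified Lean document; each statement's English description precedes it below -/
import Mathlib

section
/- Margin condition implies TNR Lipschitz bound: Suppose T* is a measurable real function on a probability space with measure P, c ∈ ℝ, and there exist δ₀ > 0 and C > 0 such that P(|T*(X) − c| ≤ x) ≤ C·x for all 0 ≤ x ≤ δ₀. Let T̂ satisfy sup_x |T̂(x) − T*(x)| = Δ ≤ δ₀. Then |P(T̂ ≤ c) − P(T* ≤ c)| ≤ 2CΔ. -/
open MeasureTheory

/-- Margin condition implies TNR Lipschitz bound: if P(|T* − c| ≤ x) ≤ C·x for all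
0 ≤ x ≤ δ₀ and Δ = sup_x |T̂(x) − T*(x)| ≤ δ₀, then
|P(T̂ ≤ c) − P(T* ≤ c)| ≤ 2·C·Δ. -/
theorem stmt10 {X : Type*} [MeasurableSpace X] [Nonempty X] (P : Measure X)
    [IsProbabilityMeasure P] (That Tstar : X → ℝ)
    (hThat : Measurable That) (hTstar : Measurable Tstar) (c δ₀ C : ℝ)
    (hδ₀ : 0 < δ₀) (hC : 0 < C)
    (hmargin : ∀ x : ℝ, 0 ≤ x → x ≤ δ₀ → (P {ω | |Tstar ω - c| ≤ x}).toReal ≤ C * x)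
    (hbdd : BddAbove (Set.range fun x => |That x - Tstar x|))
    (hΔ : (⨆ y, |That y - Tstar y|) ≤ δ₀) :
    |(P {x | That x ≤ c}).toReal - (P {x | Tstar x ≤ c}).toReal|
      ≤ 2 * C * ⨆ y, |That y - Tstar y| := by
  set Δ := ⨆ y, |That y - Tstar y| with hΔdef
  have hle : ∀ x, |That x - Tstar x| ≤ Δ := fun x =>
    le_ciSup hbdd x
  have hΔ0 : 0 ≤ Δ := le_trans (abs_nonneg _) (hle (Classical.arbitrary X))
  set M : Set X := {ω | |Tstar ω - c| ≤ Δ} with hMdef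
  have hM : (P M).toReal ≤ C * Δ := hmargin Δ hΔ0 hΔ
  have hsub1 : {x | That x ≤ c} ⊆ {x | Tstar x ≤ c} ∪ M := by
    intro x hx
    by_cases h : Tstar x ≤ c
    · exact Or.inl h
    · right
      push_neg at h
      have h1 : Tstar x - c ≤ |That x - Tstar x| := by
        have : Tstar x - c ≤ Tstar x - That x := by linarith [show That x ≤ c from hx]
        calc Tstar x - c ≤ Tstar x - That x := this
          _ ≤ |Tstar x - That x| := le_abs_self _
          _ = |That x - Tstar x| := abs_sub_comm _ _
      have : |Tstar x - c| ≤ Δ := by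
        rw [abs_of_pos (by linarith : (0:ℝ) < Tstar x - c)]
        exact h1.trans (hle x)
      exact this
  have hsub2 : {x | Tstar x ≤ c} ⊆ {x | That x ≤ c} ∪ M := by
    intro x hx
    by_cases h : That x ≤ c
    · exact Or.inl h
    · right
      push_neg at h
      have h1 : c - Tstar x ≤ |That x - Tstar x| := by
        have : c - Tstar x ≤ That x - Tstar x := by linarith
        exact this.trans (le_abs_self _)
      have : |Tstar x - c| ≤ Δ := by
        rw [abs_sub_comm, abs_of_nonneg (by linarith [show Tstar x ≤ c from hx] : (0:ℝ) ≤ c - Tstar x)]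
        exact h1.trans (hle x)
      exact this
  have hfin : ∀ s : Set X, P s ≠ ⊤ := fun s => measure_ne_top P s
  have key : ∀ A B : Set X, A ⊆ B ∪ M → (P A).toReal ≤ (P B).toReal + (P M).toReal := by
    intro A B hAB
    have h1 : P A ≤ P B + P M := (measure_mono hAB).trans (measure_union_le _ _)
    have := ENNReal.toReal_mono (by simp [ENNReal.add_ne_top, hfin]) h1
    rwa [ENNReal.toReal_add (hfin B) (hfin M)] at this
  have k1 := key _ _ hsub1
  have k2 := key _ _ hsub2
  have hCΔ : 0 ≤ C * Δ := mul_nonneg hC.le hΔ0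
  rw [abs_sub_le_iff]
  constructor <;> nlinarith [hM, k1, k2]
end

section
/- Quantitative continuity of the normalized ratio: Let μ̂, μ ∈ ℝ^d, let Σ̂, Σ be symmetric d×d matrices with λ_min(Σ̂) ≥ λ₀ > 0 and λ_min(Σ) ≥ λ₀ > 0, and define Q̂(β) = (β⊤μ̂)/√(β⊤Σ̂β) and Q(β) = (β⊤μ)/√(β⊤Σβ) for β with ‖β‖₂ = 1. Then |Q̂(β) − Q(β)| ≤ λ₀^{-1/2} |β⊤(μ̂ − μ)| + (1/2) λ₀^{-3/2} |β⊤μ̂| · |β⊤(Σ̂ − Σ)β|. -/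
/-!
Both denominators are at least `√λ₀`, since a quadratic form on a unit vector is bounded below by
the least eigenvalue. Split `a/√x - b/√y = (a - b)/√y + a (1/√x - 1/√y)` and bound the last factor
by `|x - y| / (2 λ₀^{3/2})`, using `1/√x - 1/√y = (y - x) / (√x √y (√x + √y))`.
-/

open Matrix

open scoped MatrixOrder in
lemma Matrix.IsHermitian.mul_dotProduct_self_le {n : Type*} [Fintype n] [DecidableEq n]
    {A : Matrix n n ℝ} (hA : A.IsHermitian) {c : ℝ} (hc : ∀ i, c ≤ hA.eigenvalues i)
    (x : n → ℝ) : c * (x ⬝ᵥ x) ≤ x ⬝ᵥ A *ᵥ x := by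
  have hle : algebraMap ℝ (Matrix n n ℝ) c ≤ A := by
    rw [algebraMap_le_iff_le_spectrum (ha := hA.isSelfAdjoint),
      hA.spectrum_real_eq_range_eigenvalues]
    rintro _ ⟨i, rfl⟩
    exact hc i
  simpa [sub_mulVec, Algebra.algebraMap_eq_smul_one, smul_mulVec, dotProduct_smul] using
    (Matrix.le_iff.1 hle).dotProduct_mulVec_nonneg x

lemma abs_inv_sqrt_sub_inv_sqrt_le {c x y : ℝ} (hc : 0 < c) (hx : c ≤ x) (hy : c ≤ y) :
    |(√x)⁻¹ - (√y)⁻¹| ≤ |x - y| / (2 * √c ^ 3) := by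
  have hsc : 0 < √c := Real.sqrt_pos.2 hc
  have hcx : √c ≤ √x := Real.sqrt_le_sqrt hx
  have hcy : √c ≤ √y := Real.sqrt_le_sqrt hy
  have hsx : 0 < √x := hsc.trans_le hcx
  have hsy : 0 < √y := hsc.trans_le hcy
  have hdiff : (√x)⁻¹ - (√y)⁻¹ = (y - x) / (√x * √y * (√x + √y)) := by
    rw [eq_div_iff (by positivity)]
    field_simp
    linear_combination Real.sq_sqrt (hc.le.trans hy) - Real.sq_sqrt (hc.le.trans hx)
  have hden : 2 * √c ^ 3 ≤ √x * √y * (√x + √y) := by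
    have := mul_le_mul (mul_le_mul hcx hcy hsc.le hsx.le) (add_le_add hcx hcy)
      (by positivity) (by positivity)
    linarith
  rw [hdiff, abs_div, abs_of_pos (show 0 < √x * √y * (√x + √y) by positivity), abs_sub_comm]
  exact div_le_div_of_nonneg_left (abs_nonneg _) (by positivity) hden

lemma abs_div_sqrt_sub_div_sqrt_le (a b : ℝ) {c x y : ℝ} (hc : 0 < c) (hx : c ≤ x) (hy : c ≤ y) :
    |a / √x - b / √y| ≤ (√c)⁻¹ * |a - b| + 1 / 2 * (c ^ ((3 : ℝ) / 2))⁻¹ * (|a| * |x - y|) := by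
  have hpow : c ^ ((3 : ℝ) / 2) = √c ^ 3 := by
    rw [Real.sqrt_eq_rpow, ← Real.rpow_natCast, ← Real.rpow_mul hc.le]
    norm_num
  have hfirst : |(a - b) / √y| ≤ (√c)⁻¹ * |a - b| := by
    rw [abs_div, abs_of_nonneg (Real.sqrt_nonneg y), inv_mul_eq_div]
    gcongr
  calc |a / √x - b / √y| = |(a - b) / √y + a * ((√x)⁻¹ - (√y)⁻¹)| := by
        congr 1
        ring
    _ ≤ |(a - b) / √y| + |a| * |(√x)⁻¹ - (√y)⁻¹| :=
        (abs_add_le _ _).trans_eq (by rw [abs_mul])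
    _ ≤ (√c)⁻¹ * |a - b| + |a| * (|x - y| / (2 * √c ^ 3)) := by
        gcongr
        exact abs_inv_sqrt_sub_inv_sqrt_le hc hx hy
    _ = (√c)⁻¹ * |a - b| + 1 / 2 * (c ^ ((3 : ℝ) / 2))⁻¹ * (|a| * |x - y|) := by
        rw [hpow]
        ring

theorem stmt14_general {d : ℕ} (Shat S : Matrix (Fin d) (Fin d) ℝ)
    (hShat : Shat.IsHermitian) (hS : S.IsHermitian)
    (μhat μ : Fin d → ℝ) (lam0 : ℝ) (hlam0 : 0 < lam0)
    (h1 : lam0 ≤ ⨅ i, hShat.eigenvalues i) (h2 : lam0 ≤ ⨅ i, hS.eigenvalues i)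
    (β : Fin d → ℝ) (hβ : β ⬝ᵥ β = 1) :
    |(β ⬝ᵥ μhat) / Real.sqrt (β ⬝ᵥ Shat.mulVec β)
        - (β ⬝ᵥ μ) / Real.sqrt (β ⬝ᵥ S.mulVec β)|
      ≤ (Real.sqrt lam0)⁻¹ * |β ⬝ᵥ (μhat - μ)|
        + (1 / 2) * (lam0 ^ ((3 : ℝ) / 2))⁻¹ * (|β ⬝ᵥ μhat| * |β ⬝ᵥ (Shat - S).mulVec β|) := by
  have hShat_ge : lam0 ≤ β ⬝ᵥ Shat *ᵥ β := by
    simpa only [hβ, mul_one] using hShat.mul_dotProduct_self_le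
      (fun i => h1.trans (ciInf_le (Finite.bddBelow_range _) i)) β
  have hS_ge : lam0 ≤ β ⬝ᵥ S *ᵥ β := by
    simpa only [hβ, mul_one] using hS.mul_dotProduct_self_le
      (fun i => h2.trans (ciInf_le (Finite.bddBelow_range _) i)) β
  rw [dotProduct_sub, sub_mulVec, dotProduct_sub]
  exact abs_div_sqrt_sub_div_sqrt_le _ _ hlam0 hShat_ge hS_ge

/-- Quantitative continuity of the normalized ratio: with λ_min(Σ̂), λ_min(Σ) ≥ λ₀ > 0 and
‖β‖₂ = 1, |Q̂(β) − Q(β)| ≤ λ₀^{-1/2}|β⊤(μ̂−μ)| + (1/2)λ₀^{-3/2}|β⊤μ̂||β⊤(Σ̂−Σ)β|. -/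
theorem stmt14 {d : ℕ} [NeZero d] (Shat S : Matrix (Fin d) (Fin d) ℝ)
    (hShat : Shat.IsHermitian) (hS : S.IsHermitian)
    (μhat μ : Fin d → ℝ) (lam0 : ℝ) (hlam0 : 0 < lam0)
    (h1 : lam0 ≤ ⨅ i, hShat.eigenvalues i) (h2 : lam0 ≤ ⨅ i, hS.eigenvalues i)
    (β : Fin d → ℝ) (hβ : β ⬝ᵥ β = 1) :
    |(β ⬝ᵥ μhat) / Real.sqrt (β ⬝ᵥ Shat.mulVec β)
        - (β ⬝ᵥ μ) / Real.sqrt (β ⬝ᵥ S.mulVec β)|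
      ≤ (Real.sqrt lam0)⁻¹ * |β ⬝ᵥ (μhat - μ)|
        + (1 / 2) * (lam0 ^ ((3 : ℝ) / 2))⁻¹ * (|β ⬝ᵥ μhat| * |β ⬝ᵥ (Shat - S).mulVec β|) :=
  stmt14_general Shat S hShat hS μhat μ lam0 hlam0 h1 h2 β hβ
end
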